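/- arXiv:2109.03682 — 2 statements merged into one kernel-verified Lean document; each statement's English description precedes it below -/
import Mathlib

section
/- (Appendix B, optimality) Let f_cl = 3/4 + (−1/3 + 2√6/9)/4. There do NOT exist λ₁, λ₂, λ₃, λ₄ ∈ [0,1] such that for every i ∈ {1,2,3,4}: f_cl/2 + (1/4)·[1 + (λ_i/3^{i−1})·∏_{k=1}^{i−1}(1 + 2√(1 − λ_k²))] > f_cl. Hence at most 3 observers can sequentially prepare remote states from the circle with polar angle arctan√2 (or π − arctan√2) with nonclassical average fidelity when a maximally entangled state is initially shared. -/
/-!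
A weak measurement of sharpness `λ` on one half of a singlet shrinks the correlation available
to the next observer by the factor `(1 + 2√(1 - λ²))/3`. Observer `i` (counting from `0`) sees
the residual correlation `w i = ∏_{k<i} (1 + 2√(1 - λ_k²))/3` and beats the classical fidelity
iff `λ_i w_i > τ := 2 f_cl - 1 = 1/3 + √6/9`. Since `w √(1 - λ²) = √(w² - (λw)²) ≤ √(w² - τ²)`,
an observer who beats the bound leaves at most `(w + 2√(w² - τ²))/3`; three iterations from
`w = 1` already end below `τ`, so the fourth observer cannot beat it.
-/

open Finset Real

theorem Fin.prod_Iio_val_eq_prod_range {M : Type*} [CommMonoid M] {n : ℕ} (f : ℕ → M)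
    (i : Fin n) : ∏ k ∈ Iio i, f k = ∏ k ∈ range i, f k := by
  rw [← Nat.Iio_eq_range, ← Fin.map_valEmbedding_Iio, prod_map]
  rfl

namespace SequentialRSP

noncomputable def correlationDecay (l : ℝ) : ℝ := (1 + 2 * √(1 - l ^ 2)) / 3

noncomputable def residualCorrelation (l : ℕ → ℝ) (i : ℕ) : ℝ :=
  ∏ k ∈ range i, correlationDecay (l k)

noncomputable def nextCorrelationBound (τ w : ℝ) : ℝ := (w + 2 * √(w ^ 2 - τ ^ 2)) / 3

theorem residualCorrelation_nonneg (l : ℕ → ℝ) (i : ℕ) : 0 ≤ residualCorrelation l i :=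
  prod_nonneg fun _ _ => by unfold correlationDecay; positivity

theorem residualCorrelation_eq_prod_div (l : ℕ → ℝ) (i : ℕ) :
    residualCorrelation l i = (∏ k ∈ range i, (1 + 2 * √(1 - l k ^ 2))) / 3 ^ i := by
  simp only [residualCorrelation, correlationDecay, prod_div_distrib, prod_const, card_range]

theorem mul_sqrt_one_sub_sq_le {τ l w : ℝ} (hτ : 0 ≤ τ) (hw : 0 ≤ w) (hvis : τ ≤ l * w) :
    w * √(1 - l ^ 2) ≤ √(w ^ 2 - τ ^ 2) := by
  calc w * √(1 - l ^ 2) = √(w ^ 2 - (l * w) ^ 2) := by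
        rw [← sqrt_sq hw, ← sqrt_mul (sq_nonneg w), sqrt_sq hw]
        ring_nf
    _ ≤ √(w ^ 2 - τ ^ 2) := sqrt_le_sqrt (by nlinarith)

theorem nextCorrelationBound_nonneg (τ : ℝ) {w : ℝ} (hw : 0 ≤ w) :
    0 ≤ nextCorrelationBound τ w := by
  unfold nextCorrelationBound
  positivity

theorem nextCorrelationBound_mono (τ : ℝ) {w a : ℝ} (hw : 0 ≤ w) (hwa : w ≤ a) :
    nextCorrelationBound τ w ≤ nextCorrelationBound τ a := by
  have : √(w ^ 2 - τ ^ 2) ≤ √(a ^ 2 - τ ^ 2) := sqrt_le_sqrt (by nlinarith)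
  unfold nextCorrelationBound
  linarith

theorem nextCorrelationBound_le {τ a b : ℝ} (hab : a ≤ 3 * b)
    (hsq : a ^ 2 - τ ^ 2 ≤ ((3 * b - a) / 2) ^ 2) : nextCorrelationBound τ a ≤ b := by
  have : √(a ^ 2 - τ ^ 2) ≤ (3 * b - a) / 2 := sqrt_le_iff.mpr ⟨by linarith, hsq⟩
  unfold nextCorrelationBound
  linarith

theorem mul_correlationDecay_le {τ l w : ℝ} (hτ : 0 ≤ τ) (hw : 0 ≤ w) (hvis : τ ≤ l * w) :
    w * correlationDecay l ≤ nextCorrelationBound τ w := by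
  have := mul_sqrt_one_sub_sq_le hτ hw hvis
  unfold correlationDecay nextCorrelationBound
  linarith

theorem residualCorrelation_le_iterate {τ : ℝ} (hτ : 0 ≤ τ) (l : ℕ → ℝ) (i : ℕ)
    (hvis : ∀ k < i, τ ≤ l k * residualCorrelation l k) :
    residualCorrelation l i ≤ (nextCorrelationBound τ)^[i] 1 := by
  induction i with
  | zero => simp [residualCorrelation]
  | succ i ih =>
    have hw := residualCorrelation_nonneg l i
    calc residualCorrelation l (i + 1) = residualCorrelation l i * correlationDecay (l i) :=
          prod_range_succ _ _
      _ ≤ nextCorrelationBound τ (residualCorrelation l i) :=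
          mul_correlationDecay_le hτ hw (hvis i i.lt_succ_self)
      _ ≤ (nextCorrelationBound τ)^[i + 1] 1 := by
          rw [Function.iterate_succ_apply']
          exact nextCorrelationBound_mono τ hw (ih fun k hk => hvis k (hk.trans i.lt_succ_self))

theorem nextCorrelationBound_iterate_three_lt {τ : ℝ} (hτ : 0.605 ≤ τ) :
    (nextCorrelationBound τ)^[3] 1 < τ := by
  have step : ∀ {w a b : ℝ}, 0 ≤ w → w ≤ a → a ≤ 3 * b →
      a ^ 2 - 0.605 ^ 2 ≤ ((3 * b - a) / 2) ^ 2 → nextCorrelationBound τ w ≤ b :=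
    fun hw hwa hab hsq => (nextCorrelationBound_mono τ hw hwa).trans
      (nextCorrelationBound_le hab (by nlinarith))
  have h1 : nextCorrelationBound τ 1 ≤ 0.8642 := step zero_le_one le_rfl (by norm_num) (by norm_num)
  have h2 : nextCorrelationBound τ (nextCorrelationBound τ 1) ≤ 0.6995 :=
    step (nextCorrelationBound_nonneg τ zero_le_one) h1 (by norm_num) (by norm_num)
  have h3 : nextCorrelationBound τ (nextCorrelationBound τ (nextCorrelationBound τ 1)) ≤ 0.4673 :=
    step (nextCorrelationBound_nonneg τ (nextCorrelationBound_nonneg τ zero_le_one)) h2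
      (by norm_num) (by norm_num)
  simp only [Function.iterate_succ_apply', Function.iterate_zero, id]
  linarith

end SequentialRSP

open SequentialRSP in
/-- Appendix B (optimality): no 4 sequential observers can all prepare remote states
from the circle with polar angle `arctan √2` with average fidelity exceeding the
classical bound `f_cl = 3/4 + (−1/3 + 2√6/9)/4`. -/
theorem at_most_three_bobs_nonequatorial :
    ¬ ∃ lam : Fin 4 → ℝ, (∀ i, lam i ∈ Set.Icc (0:ℝ) 1) ∧
      ∀ i : Fin 4,
        (3/4 + (-1/3 + 2 * Real.sqrt 6 / 9)/4) / 2
            + (1/4) * (1 + lam i / 3 ^ (i : ℕ)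
                * ∏ k ∈ Finset.Iio i, (1 + 2 * Real.sqrt (1 - lam k ^ 2)))
          > 3/4 + (-1/3 + 2 * Real.sqrt 6 / 9)/4 := by
  rintro ⟨lam, hlam, hfid⟩
  have hsqrt6 : 2.445 ≤ √6 := le_sqrt_of_sq_le (by norm_num)
  set τ : ℝ := 1 / 3 + √6 / 9 with hτdef
  have hτ : 0.605 ≤ τ := by linarith
  set l : ℕ → ℝ := fun k => lam (Fin.ofNat 4 k)
  have hvis : ∀ i : Fin 4, τ < l i * residualCorrelation l i := by
    intro i
    have hprod := Fin.prod_Iio_val_eq_prod_range (fun k => 1 + 2 * √(1 - l k ^ 2)) i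
    rw [residualCorrelation_eq_prod_div, ← hprod, mul_div_assoc', mul_div_right_comm]
    simp only [l, Fin.ofNat_val_eq_self]
    linarith [hfid i]
  have hlast : τ < l 3 * residualCorrelation l 3 := hvis 3
  have hbound := residualCorrelation_le_iterate (by linarith) l 3
    fun k hk => (hvis ⟨k, by omega⟩).le
  have hsmall := nextCorrelationBound_iterate_three_lt hτ
  have hsharp := mul_le_of_le_one_left (residualCorrelation_nonneg l 3) (hlam (Fin.ofNat 4 3)).2
  linarith
end

section
/- (Theorem 3) Let ξ ∈ [0, π/2] and for λ₁, …, λₙ ∈ [0,1] define H_i(ξ, λ) = 1/2 + (sin(2ξ)·λ_i/2^i)·∏_{k=1}^{i−1}(1 + √(1 − λ_k²)). Then: (i) for every ξ ∈ [0, π/2] there do NOT exist λ₁, …, λ₇ ∈ [0,1] with H_i(ξ, λ) > 3/4 for all i ∈ {1, …, 7}; (ii) H₁(ξ, λ₁) = (1 + λ₁·sin 2ξ)/2 > 3/4 if and only if 2·λ₁·sin(2ξ) > 1; in particular, if sin(2ξ) ≤ 1/2 (equivalently ξ ∈ [0, π/12] ∪ [5π/12, π/2]), then H₁(ξ, λ₁)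 ≤ 3/4 for every λ₁ ∈ [0,1], so not even one observer can achieve nonclassical RSP fidelity. -/
/-!
Put `w_i = ∏_{k<i} (1 + √(1 - λ_k²))/2`, so that `H_i = 1/2 + sin(2ξ) λ_i w_i / 2`. Since
`sin 2ξ ≤ 1`, observer `i` beats `3/4` only if `λ_i w_i > 1/2`, and then
`w_{i+1} = (w_i + √(w_i² - (λ_i w_i)²))/2 < (w_i + √(w_i² - 1/4))/2`. Iterating this bound from
`w_0 = 1` gives `w_1 ≤ 15/16, w_2 ≤ 7/8, w_3 ≤ 4/5, w_4 ≤ 18/25, w_5 ≤ 31/50, w_6 ≤ 1/2`, so the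
seventh observer would need `λ_6 > 1`.
-/

open Finset Real

theorem Fin.prod_Iio_eq_prod_range {M : Type*} [CommMonoid M] {n : ℕ} [NeZero n]
    (f : Fin n → M) (i : Fin n) : ∏ k ∈ Iio i, f k = ∏ k ∈ range i, f (Fin.ofNat n k) := by
  rw [← Nat.Iio_eq_range, ← Fin.map_valEmbedding_Iio, prod_map]
  simp only [Fin.valEmbedding_apply, Fin.ofNat_eq_cast, Fin.cast_val_eq_self]

theorem Real.sin_le_half_iff {x : ℝ} (h0 : 0 ≤ x) (hπ : x ≤ π) :
    sin x ≤ 1 / 2 ↔ x ≤ π / 6 ∨ 5 * π / 6 ≤ x := by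
  have hπ0 := pi_pos
  rw [← sin_pi_div_six]
  rcases le_total x (π / 2) with hx | hx
  · rw [strictMonoOn_sin.le_iff_le ⟨by linarith, hx⟩ ⟨by linarith, by linarith⟩]
    exact ⟨Or.inl, by rintro (h | h) <;> linarith⟩
  · rw [← sin_pi_sub,
      strictMonoOn_sin.le_iff_le ⟨by linarith, by linarith⟩ ⟨by linarith, by linarith⟩]
    exact ⟨fun h => Or.inr (by linarith), by rintro (h | h) <;> linarith⟩

-- The last two hypotheses say `(b + √(b² - 1/4))/2 ≤ c`.
theorem mul_one_add_sqrt_one_sub_sq_div_two_le {l q b c : ℝ} (hl : 0 ≤ l) (hlq : 1 / 2 < l * q)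
    (hqb : q ≤ b) (hbc : b ≤ 2 * c) (hc : b ^ 2 - 1 / 4 ≤ (2 * c - b) ^ 2) :
    q * ((1 + √(1 - l ^ 2)) / 2) ≤ c := by
  have hq : 0 < q := pos_of_mul_pos_right (by linarith) hl
  have : q * √(1 - l ^ 2) ≤ 2 * c - b := by
    rw [← sqrt_sq hq.le, ← sqrt_mul (sq_nonneg _), sqrt_le_left (by linarith)]
    nlinarith
  linarith

noncomputable section

namespace SequentialRSP

variable (s : ℝ) (lam : ℕ → ℝ)

-- `fidelity (sin (2 * ξ)) lam i` is the paper's `H_{i+1}`: observers are numbered from `0`.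
def fidelity (i : ℕ) : ℝ :=
  1 / 2 + s * lam i / 2 ^ (i + 1) * ∏ k ∈ range i, (1 + √(1 - lam k ^ 2))

def weight (i : ℕ) : ℝ :=
  ∏ k ∈ range i, (1 + √(1 - lam k ^ 2)) / 2

theorem weight_nonneg (i : ℕ) : 0 ≤ weight lam i :=
  prod_nonneg fun _ _ => by positivity

variable {s lam}

theorem fidelity_eq_weight (i : ℕ) :
    fidelity s lam i = 1 / 2 + s * (lam i * weight lam i) / 2 := by
  rw [fidelity, weight, prod_div_distrib, prod_const, card_range]
  field_simp
  ring

theorem half_lt_mul_weight {i : ℕ} (hs : s ≤ 1) (hl : 0 ≤ lam i)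
    (h : 3 / 4 < fidelity s lam i) : 1 / 2 < lam i * weight lam i := by
  rw [fidelity_eq_weight] at h
  nlinarith [mul_nonneg hl (weight_nonneg lam i)]

theorem weight_succ_le {i : ℕ} {b c : ℝ} (hl : 0 ≤ lam i) (h : 1 / 2 < lam i * weight lam i)
    (hb : weight lam i ≤ b) (hbc : b ≤ 2 * c) (hc : b ^ 2 - 1 / 4 ≤ (2 * c - b) ^ 2) :
    weight lam (i + 1) ≤ c := by
  rw [weight, prod_range_succ]
  exact mul_one_add_sqrt_one_sub_sq_div_two_le hl h hb hbc hc

theorem not_forall_lt_seven_fidelity_gt (hs : s ≤ 1) (hlam : ∀ i < 7, lam i ∈ Set.Icc 0 1) :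
    ¬ ∀ i < 7, 3 / 4 < fidelity s lam i := by
  intro h
  have obs (i : ℕ) (hi : i < 7) : 1 / 2 < lam i * weight lam i :=
    half_lt_mul_weight hs (hlam i hi).1 (h i hi)
  have step {i : ℕ} (hi : i < 7) {b c : ℝ} (hb : weight lam i ≤ b) (hbc : b ≤ 2 * c)
      (hc : b ^ 2 - 1 / 4 ≤ (2 * c - b) ^ 2) : weight lam (i + 1) ≤ c :=
    weight_succ_le (hlam i hi).1 (obs i hi) hb hbc hc
  have w0 : weight lam 0 ≤ 1 := by simp [weight]
  have w1 : weight lam 1 ≤ 15 / 16 := step (by norm_num) w0 (by norm_num) (by norm_num)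
  have w2 : weight lam 2 ≤ 7 / 8 := step (by norm_num) w1 (by norm_num) (by norm_num)
  have w3 : weight lam 3 ≤ 4 / 5 := step (by norm_num) w2 (by norm_num) (by norm_num)
  have w4 : weight lam 4 ≤ 18 / 25 := step (by norm_num) w3 (by norm_num) (by norm_num)
  have w5 : weight lam 5 ≤ 31 / 50 := step (by norm_num) w4 (by norm_num) (by norm_num)
  have w6 : weight lam 6 ≤ 1 / 2 := step (by norm_num) w5 (by norm_num) (by norm_num)
  have := mul_le_mul (hlam 6 (by norm_num)).2 w6 (weight_nonneg lam 6) zero_le_one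
  linarith [obs 6 (by norm_num)]

end SequentialRSP

end

open SequentialRSP in
/-- Theorem 3: with the non-maximally entangled initial state
`cos ξ |01⟩ − sin ξ |10⟩`, (i) no 7 observers can all exceed the classical equatorial
fidelity bound 3/4; (ii) the first observer succeeds iff `2 λ₁ sin 2ξ > 1`; in
particular when `sin 2ξ ≤ 1/2` (equivalently `ξ ∈ [0,π/12] ∪ [5π/12,π/2]`) not even
one observer achieves nonclassical RSP fidelity. -/
theorem nonmaximally_entangled_rsp :
    (∀ ξ ∈ Set.Icc (0:ℝ) (Real.pi/2),
      ¬ ∃ lam : Fin 7 → ℝ, (∀ i, lam i ∈ Set.Icc (0:ℝ) 1) ∧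
        ∀ i : Fin 7,
          1/2 + Real.sin (2*ξ) * lam i / 2 ^ ((i : ℕ) + 1)
              * ∏ k ∈ Finset.Iio i, (1 + Real.sqrt (1 - lam k ^ 2)) > 3/4) ∧
    (∀ ξ ∈ Set.Icc (0:ℝ) (Real.pi/2), ∀ l₁ ∈ Set.Icc (0:ℝ) 1,
      ((1 + l₁ * Real.sin (2*ξ))/2 > 3/4 ↔ 2 * l₁ * Real.sin (2*ξ) > 1)) ∧
    (∀ ξ ∈ Set.Icc (0:ℝ) (Real.pi/2),
      (Real.sin (2*ξ) ≤ 1/2 ↔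
        ξ ∈ Set.Icc (0:ℝ) (Real.pi/12) ∪ Set.Icc (5*Real.pi/12) (Real.pi/2))) ∧
    (∀ ξ ∈ Set.Icc (0:ℝ) (Real.pi/2), Real.sin (2*ξ) ≤ 1/2 →
      ∀ l₁ ∈ Set.Icc (0:ℝ) 1, (1 + l₁ * Real.sin (2*ξ))/2 ≤ 3/4) := by
  refine ⟨?_, fun ξ _ l₁ _ => by constructor <;> intro h <;> linarith, ?_, ?_⟩
  · rintro ξ - ⟨lam, hlam, h⟩
    refine not_forall_lt_seven_fidelity_gt (lam := fun n => lam (Fin.ofNat 7 n))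
      (sin_le_one (2 * ξ)) (fun i _ => hlam _) fun i hi => ?_
    have hi' : Fin.ofNat 7 i = ⟨i, hi⟩ := Fin.ext (Nat.mod_eq_of_lt hi)
    simpa only [fidelity, hi', Fin.prod_Iio_eq_prod_range, Fin.val_mk, gt_iff_lt] using h ⟨i, hi⟩
  · rintro ξ ⟨hξ0, hξ1⟩
    have := pi_pos
    rw [sin_le_half_iff (by linarith) (by linarith)]
    simp only [Set.mem_union, Set.mem_Icc]
    constructor
    · rintro (h | h)
      · exact Or.inl ⟨hξ0, by linarith⟩
      · exact Or.inr ⟨by linarith, hξ1⟩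
    · rintro (h | h)
      · exact Or.inl (by linarith)
      · exact Or.inr (by linarith)
  · rintro ξ - hs l₁ ⟨hl0, hl1⟩
    nlinarith [mul_nonneg hl0 (by linarith : (0:ℝ) ≤ 1/2 - sin (2 * ξ))]
end
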